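/- Let 𝒢 be an abelian semigroup of affine maps of ℂⁿ generated by f₁,…,f_p (p≥1) such that G=Φ(𝒢) is contained in K_{η,r}(ℂ) for some partition η=(n₁,…,n_r) of n+1. If J_𝒢(v)=ℂⁿ for some v∈U', then the orbit 𝒢(v) is dense in ℂⁿ. -/

import Mathlib

open Filter Topology

/-- An affine map `x ↦ A x + a` on `ℂⁿ`, encoded by the pair `(A, a)`
    of its linear part and translation part. -/
abbrev AffMap (n : ℕ) := Matrix (Fin n) (Fin n) ℂ × (Fin n → ℂ)

/-- The action of the affine map `f = (A, a)` on a vector: `f x = A x + a`. -/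
noncomputable def affApply {n : ℕ} (f : AffMap n) (x : Fin n → ℂ) : Fin n → ℂ :=
  f.1.mulVec x + f.2

/-- The composition of affine maps, as pairs: `(A,a) ∘ (B,b) = (A B, A b + a)`. -/
noncomputable def affComp {n : ℕ} (f g : AffMap n) : AffMap n :=
  (f.1 * g.1, f.1.mulVec g.2 + f.2)

/-- The map `f₁^{k₁} ∘ f₂^{k₂} ∘ ⋯ ∘ f_p^{k_p}`. -/
noncomputable def wordApply {n p : ℕ} (f : Fin p → AffMap n) (k : Fin p → ℕ) :
    (Fin n → ℂ) → (Fin n → ℂ) :=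
  (List.ofFn fun j => (affApply (f j))^[k j]).foldr (· ∘ ·) id

/-- The orbit `𝒢(x)` of `x` under the semigroup `𝒢` generated by `f₁,…,f_p`. -/
def affOrbit {n p : ℕ} (f : Fin p → AffMap n) (x : Fin n → ℂ) : Set (Fin n → ℂ) :=
  {y | ∃ k : Fin p → ℕ, 1 ≤ ∑ j, k j ∧ wordApply f k x = y}

/-- The extended limit set `J_𝒢(x)` of the semigroup generated by `f₁,…,f_p`. -/
def Jset {n p : ℕ} (f : Fin p → AffMap n) (x : Fin n → ℂ) : Set (Fin n → ℂ) :=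
  {y | ∃ (xs : ℕ → Fin n → ℂ) (k : ℕ → Fin p → ℕ),
    Tendsto xs atTop (𝓝 x) ∧
    Tendsto (fun m => ∑ j, k m j) atTop atTop ∧
    Tendsto (fun m => wordApply f (k m) (xs m)) atTop (𝓝 y)}

/-- `𝒢` is hypercyclic: some orbit is dense. -/
def AffHypercyclic {n p : ℕ} (f : Fin p → AffMap n) : Prop :=
  ∃ v : Fin n → ℂ, Dense (affOrbit f v)

/-- The embedding `Φ : MA(n,ℂ) → M_{n+1}(ℂ)`, `(A,a) ↦ [[1,0],[a,A]]`. -/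
def Phi {n : ℕ} (f : AffMap n) : Matrix (Fin (n + 1)) (Fin (n + 1)) ℂ :=
  Matrix.of fun i j =>
    Fin.cases (Fin.cases (1 : ℂ) (fun _ => 0) j)
      (fun i' => Fin.cases (f.2 i') (fun j' => f.1 i' j') j) i

/-- The matrix `B₁^{k₁} B₂^{k₂} ⋯ B_p^{k_p}`. -/
noncomputable def wordMat {m p : ℕ} (B : Fin p → Matrix (Fin m) (Fin m) ℂ) (k : Fin p → ℕ) :
    Matrix (Fin m) (Fin m) ℂ :=
  (List.ofFn fun j => B j ^ k j).prod

/-- The index at which the `k`-th diagonal block of the partition `η` begins. -/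
def blockStart {r : ℕ} (η : Fin r → ℕ) (k : Fin r) : ℕ :=
  ∑ l ∈ Finset.Iio k, η l

/-- `i` is an index belonging to the `k`-th block of the partition `η`. -/
def inBlock {r m : ℕ} (η : Fin r → ℕ) (k : Fin r) (i : Fin m) : Prop :=
  blockStart η k ≤ (i : ℕ) ∧ (i : ℕ) < blockStart η k + η k

/-- `K_{η,r}(ℂ) = T_{n₁}(ℂ) ⊕ ⋯ ⊕ T_{n_r}(ℂ)`: block-diagonal matrices whose
    `k`-th diagonal block is lower triangular with constant diagonal. -/
def Kset (n r : ℕ) (η : Fin r → ℕ) : Set (Matrix (Fin (n + 1)) (Fin (n + 1)) ℂ) :=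
  {A | (∀ i j : Fin (n + 1), (¬ ∃ k, inBlock η k i ∧ inBlock η k j) → A i j = 0) ∧
       (∀ i j : Fin (n + 1), (∃ k, inBlock η k i ∧ inBlock η k j) → (i : ℕ) < (j : ℕ) → A i j = 0) ∧
       (∀ k : Fin r, ∀ i j : Fin (n + 1), inBlock η k i → inBlock η k j → A i i = A j j)}

/-- `U' ⊆ ℂⁿ`: those `x` such that `(1,x) ∈ ∏_k (ℂ* × ℂ^{n_k-1})`, i.e. the
    coordinate of `(1,x)` at the start of each block is nonzero. -/
def Uprime (n r : ℕ) (η : Fin r → ℕ) : Set (Fin n → ℂ) :=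
  {x | ∀ k : Fin r, ∀ i : Fin (n + 1), (i : ℕ) = blockStart η k → (Fin.cons 1 x : Fin (n + 1) → ℂ) i ≠ 0}

/-- The set of scalar matrices `{λ I : λ ∈ ℂ}`. -/
def scalarMats (m : ℕ) : Set (Matrix (Fin m) (Fin m) ℂ) :=
  Set.range fun c : ℂ => c • (1 : Matrix (Fin m) (Fin m) ℂ)

/-- The vector `u₀ = (e_{1,1}, …, e_{r,1}) ∈ ℂ^{n+1}`: coordinate `1` at the
    start of each block, `0` elsewhere. -/
noncomputable def u0vec (n r : ℕ) (η : Fin r → ℕ) : Fin (n + 1) → ℂ :=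
  open Classical in
  fun i => if ∃ k : Fin r, (i : ℕ) = blockStart η k then 1 else 0

/-!
Let `𝒜 ⊆ K_{η,r}` be the commutative algebra spanned by the words in the `Φ(fᵢ)`, put
`ṽ = (1, v)`, and let `𝒩 = 𝒜 ∩ ker diag`, whose elements are strictly lower triangular.
For `y ∈ J_𝒢(v)` take words `Bₜ` and `xₜ → v` with `Bₜ (1, xₜ) → (1, y)`. Since `ṽ` does not
vanish where a block starts, the diagonals of the `Bₜ` converge; subtracting from `Bₜ` the
element of `𝒜` with the same diagonal given by a linear section of `diag` leaves an element
of `𝒩`, and in the limit `(1, y) ∈ 𝒜 ṽ + 𝒩 ℂⁿ⁺¹`. As `J_𝒢(v) = ℂⁿ`, this gives `𝒜 ṽ + 𝒩 ℂⁿ⁺¹ = ℂⁿ⁺¹`, and since `𝒩` is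
nilpotent and preserves `𝒜 ṽ`, `ṽ` is a cyclic vector of `𝒜`. Hence `(1, xₜ) = Cₜ ṽ` with
`Cₜ ∈ 𝒜` tending to the identity, and `Bₜ (1, xₜ) = Cₜ (Bₜ ṽ)` by commutativity, so
`Bₜ ṽ → (1, y)`: `y` is a limit of points `Bₜ · v` of the orbit.
-/

open Matrix

lemma LinearMap.exists_section_on_map {K V W : Type*} [Field K] [AddCommGroup V] [Module K V]
    [AddCommGroup W] [Module K W] (φ : V →ₗ[K] W) (p : Submodule K V) :
    ∃ τ : W →ₗ[K] V, (∀ w, τ w ∈ p) ∧ ∀ w ∈ p.map φ, φ (τ w) = w := by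
  let ψ := φ ∘ₗ p.subtype
  obtain ⟨g, hg⟩ := ψ.rangeRestrict.exists_rightInverse_of_surjective ψ.range_rangeRestrict
  obtain ⟨h, hh⟩ := LinearMap.exists_extend g
  refine ⟨p.subtype ∘ₗ h, fun w => (h w).2, fun w hw => ?_⟩
  have hw : w ∈ ψ.range := by rwa [LinearMap.range_comp, Submodule.range_subtype]
  simpa [ψ, ← hh] using congrArg Subtype.val (LinearMap.congr_fun hg ⟨w, hw⟩)

lemma Filter.Tendsto.matrix_mulVec {α ι R : Type*} [Fintype ι] [TopologicalSpace R]
    [NonUnitalNonAssocSemiring R] [IsTopologicalSemiring R] {l : Filter α}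
    {A : α → Matrix ι ι R} {x : α → ι → R} {A₀ : Matrix ι ι R} {x₀ : ι → R}
    (hA : Tendsto A l (𝓝 A₀)) (hx : Tendsto x l (𝓝 x₀)) :
    Tendsto (fun a => A a *ᵥ x a) l (𝓝 (A₀ *ᵥ x₀)) :=
  ((continuous_fst.matrix_mulVec continuous_snd).tendsto (A₀, x₀)).comp (hA.prodMk_nhds hx)

lemma tendsto_of_tendsto_mulVec_of_tendsto_one {α ι 𝕜 : Type*} [Fintype ι] [DecidableEq ι]
    [NormedField 𝕜] {l : Filter α} {C : α → Matrix ι ι 𝕜} (hC : Tendsto C l (𝓝 1))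
    {u : α → ι → 𝕜} {w : ι → 𝕜} (h : Tendsto (fun a => C a *ᵥ u a) l (𝓝 w)) :
    Tendsto u l (𝓝 w) := by
  have hinv : Tendsto (fun a => (C a)⁻¹) l (𝓝 1) := by
    have hcont : ContinuousAt Inv.inv (1 : Matrix ι ι 𝕜) := continuousAt_matrix_inv 1 (by
      simpa [Ring.inverse_eq_inv'] using continuousAt_inv₀ (one_ne_zero (α := 𝕜)))
    simpa only [Function.comp_def, inv_one] using hcont.tendsto.comp hC
  have hdet : Tendsto (fun a => (C a).det) l (𝓝 1) := by
    simpa only [Function.comp_def, id, Matrix.det_one] using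
      ((continuous_id.matrix_det).tendsto 1).comp hC
  refine (Matrix.one_mulVec w ▸ hinv.matrix_mulVec h).congr' ?_
  filter_upwards [hdet.eventually_ne one_ne_zero] with a ha
  rw [Matrix.mulVec_mulVec, Matrix.nonsing_inv_mul _ ha.isUnit, Matrix.one_mulVec]

lemma tendsto_cons_one_iff {α R : Type*} [One R] [TopologicalSpace R] {n : ℕ} {l : Filter α}
    {x : α → Fin n → R} {y : Fin n → R} :
    Tendsto (fun a => (Fin.cons 1 (x a) : Fin (n + 1) → R)) l (𝓝 (Fin.cons 1 y)) ↔
      Tendsto x l (𝓝 y) := by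
  simp [tendsto_pi_nhds, Fin.forall_fin_succ, tendsto_const_nhds]

lemma Submodule.eq_top_of_forall_cons_one_mem {R : Type*} [Ring R] {n : ℕ}
    {W : Submodule R (Fin (n + 1) → R)} (h : ∀ y, (Fin.cons 1 y : Fin (n + 1) → R) ∈ W) :
    W = ⊤ := by
  refine eq_top_iff.mpr fun x _ => ?_
  have hx : x = x 0 • (Fin.cons 1 0 : Fin (n + 1) → R) +
      (Fin.cons 1 (Fin.tail x) - Fin.cons 1 0) := by
    ext i
    refine Fin.cases ?_ (fun i => ?_) i <;> simp [Fin.tail]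
  rw [hx]
  exact add_mem (smul_mem _ _ (h 0)) (sub_mem (h _) (h 0))

section Nilpotent

variable {R : Type*} [CommRing R] {m : ℕ}

variable (R m) in
def vanishingBelow (t : ℕ) : Submodule R (Fin m → R) where
  carrier := {x | ∀ i : Fin m, (i : ℕ) < t → x i = 0}
  zero_mem' _ _ := rfl
  add_mem' hx hy i hi := by simp [hx i hi, hy i hi]
  smul_mem' c x hx i hi := by simp [hx i hi]

lemma map₂_mulVecBilin_vanishingBelow_le {𝒩 : Submodule R (Matrix (Fin m) (Fin m) R)}
    (h𝒩 : ∀ N ∈ 𝒩, ∀ i j, i ≤ j → N i j = 0) (t : ℕ) :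
    Submodule.map₂ (mulVecBilin R R) 𝒩 (vanishingBelow R m t) ≤ vanishingBelow R m (t + 1) := by
  refine Submodule.map₂_le.mpr fun N hN x hx i hi => ?_
  simp only [mulVecBilin_apply, mulVec, dotProduct]
  refine Finset.sum_eq_zero fun j _ => ?_
  rcases lt_or_ge (j : ℕ) t with hj | hj
  · simp [hx j hj]
  · simp [h𝒩 N hN i j (Fin.le_def.mpr (by omega))]

theorem eq_top_of_sup_map₂_mulVecBilin_eq_top {𝒩 : Submodule R (Matrix (Fin m) (Fin m) R)}
    (h𝒩 : ∀ N ∈ 𝒩, ∀ i j, i ≤ j → N i j = 0) {W : Submodule R (Fin m → R)}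
    (hW : Submodule.map₂ (mulVecBilin R R) 𝒩 W ≤ W)
    (htop : W ⊔ Submodule.map₂ (mulVecBilin R R) 𝒩 ⊤ = ⊤) : W = ⊤ := by
  have key : ∀ t, W ⊔ vanishingBelow R m t = ⊤ := by
    intro t
    induction t with
    | zero =>
      exact eq_top_iff.mpr fun x _ => Submodule.mem_sup_right fun i hi => absurd hi (by omega)
    | succ t ih =>
      rw [eq_top_iff, ← htop, ← ih, Submodule.map₂_sup_right]
      exact sup_le le_sup_left (sup_le (hW.trans le_sup_left)
        ((map₂_mulVecBilin_vanishingBelow_le h𝒩 t).trans le_sup_right))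
  have hbot : vanishingBelow R m m = ⊥ :=
    eq_bot_iff.mpr fun x hx => (Submodule.mem_bot R).mpr (funext fun i => hx i i.isLt)
  simpa [hbot] using key m

end Nilpotent

section Affine

variable {n : ℕ}

lemma Phi_mulVec_cons (g : AffMap n) (x : Fin n → ℂ) :
    Phi g *ᵥ (Fin.cons 1 x : Fin (n + 1) → ℂ) = Fin.cons 1 (affApply g x) := by
  funext i
  refine Fin.cases ?_ (fun i => ?_) i
  · simp [Phi, Matrix.mulVec, dotProduct, Fin.sum_univ_succ]
  · simp [Phi, Matrix.mulVec, dotProduct, Fin.sum_univ_succ, affApply, add_comm]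

lemma Phi_affComp (g h : AffMap n) : Phi (affComp g h) = Phi g * Phi h := by
  ext i j
  refine Fin.cases ?_ (fun i => ?_) i <;> refine Fin.cases ?_ (fun j => ?_) j <;>
    simp [Phi, affComp, Matrix.mul_apply, Fin.sum_univ_succ, Matrix.mulVec, dotProduct, add_comm]

lemma Phi_pow_mulVec_cons (g : AffMap n) (m : ℕ) (x : Fin n → ℂ) :
    Phi g ^ m *ᵥ (Fin.cons 1 x : Fin (n + 1) → ℂ) = Fin.cons 1 ((affApply g)^[m] x) := by
  induction m generalizing x with
  | zero => simp
  | succ m ih =>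
    rw [pow_succ, ← Matrix.mulVec_mulVec, Phi_mulVec_cons, ih, Function.iterate_succ_apply]

lemma wordMat_Phi_mulVec_cons {p : ℕ} (f : Fin p → AffMap n) (k : Fin p → ℕ) (x : Fin n → ℂ) :
    wordMat (fun j => Phi (f j)) k *ᵥ (Fin.cons 1 x : Fin (n + 1) → ℂ) =
      Fin.cons 1 (wordApply f k x) := by
  induction p with
  | zero => simp [wordMat, wordApply]
  | succ p ih =>
    have := ih (fun j => f j.succ) (fun j => k j.succ)
    simp only [wordMat, wordApply, List.ofFn_succ, List.prod_cons, List.foldr_cons] at this ⊢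
    rw [← Matrix.mulVec_mulVec, this, Phi_pow_mulVec_cons]
    rfl

end Affine

section Words

variable {m p : ℕ} {B : Fin p → Matrix (Fin m) (Fin m) ℂ}

lemma wordMat_zero : wordMat B 0 = 1 :=
  List.prod_eq_one (by simp)

lemma wordMat_add (hB : ∀ i j, Commute (B i) (B j)) (k l : Fin p → ℕ) :
    wordMat B (k + l) = wordMat B k * wordMat B l := by
  induction p with
  | zero => simp [wordMat]
  | succ p ih =>
    have htail := ih (fun i j => hB i.succ j.succ) (fun j => k j.succ) (fun j => l j.succ)
    simp only [wordMat, List.ofFn_succ, List.prod_cons, Pi.add_apply] at htail ⊢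
    have hcomm : Commute (B 0 ^ l 0) (List.ofFn fun i : Fin p => B i.succ ^ k i.succ).prod :=
      Commute.list_prod_right _ _ (by simpa using fun j : Fin p => (hB 0 j.succ).pow_pow _ _)
    rw [htail, pow_add, mul_assoc, ← mul_assoc (B 0 ^ l 0), hcomm.eq]
    simp only [mul_assoc]

variable (B) in
noncomputable def wordSpan : Submodule ℂ (Matrix (Fin m) (Fin m) ℂ) :=
  Submodule.span ℂ (Set.range (wordMat B))

lemma wordMat_mem_wordSpan (k : Fin p → ℕ) : wordMat B k ∈ wordSpan B :=
  Submodule.subset_span ⟨k, rfl⟩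

lemma one_mem_wordSpan : 1 ∈ wordSpan B :=
  wordMat_zero (B := B) ▸ wordMat_mem_wordSpan 0

lemma mul_mem_wordSpan (hB : ∀ i j, Commute (B i) (B j)) {a b : Matrix (Fin m) (Fin m) ℂ}
    (ha : a ∈ wordSpan B) (hb : b ∈ wordSpan B) : a * b ∈ wordSpan B := by
  have hmul : wordSpan B * wordSpan B ≤ wordSpan B := by
    rw [wordSpan, Submodule.span_mul_span, Submodule.span_le]
    rintro _ ⟨_, ⟨k, rfl⟩, _, ⟨l, rfl⟩, rfl⟩
    exact Submodule.subset_span ⟨k + l, wordMat_add hB k l⟩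
  exact hmul (Submodule.mul_mem_mul ha hb)

lemma commute_wordMat_of_mem_wordSpan (hB : ∀ i j, Commute (B i) (B j)) (k : Fin p → ℕ)
    {a : Matrix (Fin m) (Fin m) ℂ} (ha : a ∈ wordSpan B) : Commute (wordMat B k) a := by
  have hle : wordSpan B ≤ (Subalgebra.centralizer ℂ {wordMat B k}).toSubmodule := by
    rw [wordSpan, Submodule.span_le]
    rintro _ ⟨l, rfl⟩
    simp only [SetLike.mem_coe, Subalgebra.mem_toSubmodule, Subalgebra.mem_centralizer_iff,
      Set.mem_singleton_iff, forall_eq]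
    rw [← wordMat_add hB, ← wordMat_add hB, add_comm]
  simpa [Subalgebra.mem_centralizer_iff, Commute, SemiconjBy] using hle ha

lemma wordSpan_le (S : Submodule ℂ (Matrix (Fin m) (Fin m) ℂ)) (h1 : 1 ∈ S)
    (hS : ∀ k : Fin p → ℕ, 1 ≤ ∑ j, k j → wordMat B k ∈ S) : wordSpan B ≤ S := by
  refine Submodule.span_le.mpr ?_
  rintro _ ⟨k, rfl⟩
  by_cases hk : 1 ≤ ∑ j, k j
  · exact hS k hk
  · have : k = 0 := funext fun j => Finset.sum_eq_zero_iff.mp (by omega) j (Finset.mem_univ j)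
    rw [this, wordMat_zero]
    exact h1

end Words

section Blocks

variable {r : ℕ} {η : Fin r → ℕ}

lemma blockStart_add_self (k : Fin r) : blockStart η k + η k = ∑ l ∈ Finset.Iic k, η l := by
  rw [← Finset.Iio_insert, Finset.sum_insert (by simp), blockStart, add_comm]

lemma blockStart_add_le_of_lt {k l : Fin r} (h : k < l) :
    blockStart η k + η k ≤ blockStart η l := by
  rw [blockStart_add_self, blockStart]
  exact Finset.sum_le_sum_of_subset fun x hx =>
    Finset.mem_Iio.mpr ((Finset.mem_Iic.mp hx).trans_lt h)

lemma exists_inBlock {m : ℕ} (hsum : ∑ k, η k = m) (i : Fin m) : ∃ k, inBlock η k i := by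
  classical
  have hr : r ≠ 0 := by
    rintro rfl
    rw [Finset.univ_eq_empty, Finset.sum_empty] at hsum
    subst hsum
    exact i.elim0
  set S := Finset.univ.filter fun k : Fin r => blockStart η k ≤ i
  have hS : S.Nonempty := by
    refine ⟨⟨0, Nat.pos_of_ne_zero hr⟩, Finset.mem_filter.mpr ⟨Finset.mem_univ _, ?_⟩⟩
    rw [blockStart, Finset.sum_eq_zero fun l hl =>
      absurd (Finset.mem_Iio.mp hl) (by simp [Fin.lt_def])]
    exact Nat.zero_le _
  obtain ⟨k, hkS, hmax⟩ := S.exists_max_image id hS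
  have hk : blockStart η k ≤ i := (Finset.mem_filter.mp hkS).2
  refine ⟨k, hk, lt_of_not_ge fun hge => ?_⟩
  by_cases hkmax : IsMax k
  · have : Finset.Iic k = Finset.univ := Finset.eq_univ_of_forall fun l =>
      Finset.mem_Iic.mpr (not_lt.mp hkmax.not_lt)
    rw [blockStart_add_self, this, hsum] at hge
    exact absurd i.isLt (not_lt.mpr hge)
  · have hsucc : Order.succ k ∈ S := by
      refine Finset.mem_filter.mpr ⟨Finset.mem_univ _, ?_⟩
      rwa [blockStart, Finset.Iio_succ_eq_Iic_of_not_isMax hkmax, ← blockStart_add_self]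
    exact absurd (hmax _ hsucc) (not_le.mpr (Order.lt_succ_of_not_isMax hkmax))

end Blocks

section BlockTriangular

variable {n r : ℕ} {η : Fin r → ℕ} {A : Matrix (Fin (n + 1)) (Fin (n + 1)) ℂ}

variable (n r η) in
noncomputable def KsetSubmodule : Submodule ℂ (Matrix (Fin (n + 1)) (Fin (n + 1)) ℂ) where
  carrier := Kset n r η
  zero_mem' := by simp [Kset]
  add_mem' := by
    rintro A B ⟨hA₁, hA₂, hA₃⟩ ⟨hB₁, hB₂, hB₃⟩
    exact ⟨fun i j h => by simp [hA₁ i j h, hB₁ i j h],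
      fun i j h h' => by simp [hA₂ i j h h', hB₂ i j h h'],
      fun k i j h h' => by simp [hA₃ k i j h h', hB₃ k i j h h']⟩
  smul_mem' := by
    rintro c A ⟨hA₁, hA₂, hA₃⟩
    exact ⟨fun i j h => by simp [hA₁ i j h], fun i j h h' => by simp [hA₂ i j h h'],
      fun k i j h h' => by simp [hA₃ k i j h h']⟩

lemma one_mem_Kset (hsum : ∑ k, η k = n + 1) : 1 ∈ Kset n r η := by
  refine ⟨fun i j hij => ?_, fun i j _ hij => ?_, fun k i j _ _ => by simp⟩
  · obtain rfl | hne := eq_or_ne i j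
    · obtain ⟨k, hk⟩ := exists_inBlock hsum i
      exact absurd ⟨k, hk, hk⟩ hij
    · exact Matrix.one_apply_ne hne
  · exact Matrix.one_apply_ne (Fin.ne_of_lt hij)

namespace Kset

lemma apply_eq_zero_of_lt (hA : A ∈ Kset n r η) {i j : Fin (n + 1)} (h : i < j) : A i j = 0 := by
  by_cases hij : ∃ k, inBlock η k i ∧ inBlock η k j
  · exact hA.2.1 i j hij h
  · exact hA.1 i j hij

lemma apply_eq_zero_of_le (hA : A ∈ Kset n r η) (hdiag : A.diag = 0) {i j : Fin (n + 1)}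
    (h : i ≤ j) : A i j = 0 := by
  obtain rfl | hlt := h.eq_or_lt
  · exact congrFun hdiag i
  · exact apply_eq_zero_of_lt hA hlt

lemma apply_eq_zero_of_eq_blockStart (hA : A ∈ Kset n r η) {k : Fin r} {s j : Fin (n + 1)}
    (hs : (s : ℕ) = blockStart η k) (hj : j ≠ s) : A s j = 0 := by
  by_cases hsj : ∃ l, inBlock η l s ∧ inBlock η l j
  · obtain ⟨l, hls, hlj⟩ := hsj
    have hstart : blockStart η k ≤ blockStart η l := by
      rcases lt_trichotomy l k with hlk | rfl | hkl
      · have := blockStart_add_le_of_lt (η := η) hlk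
        have := hls.2
        omega
      · exact le_rfl
      · exact (Nat.le_add_right _ _).trans (blockStart_add_le_of_lt hkl)
    have := hlj.1
    exact hA.2.1 s j ⟨l, hls, hlj⟩ (lt_of_le_of_ne (by omega) (Fin.val_ne_of_ne hj.symm))
  · exact hA.1 s j hsj

lemma mulVec_apply_of_eq_blockStart (hA : A ∈ Kset n r η) {k : Fin r} {s : Fin (n + 1)}
    (hs : (s : ℕ) = blockStart η k) (x : Fin (n + 1) → ℂ) : (A *ᵥ x) s = A s s * x s :=
  Finset.sum_eq_single s (fun j _ hj => by simp [apply_eq_zero_of_eq_blockStart hA hs hj])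
    (absurd (Finset.mem_univ s))

end Kset

lemma exists_tendsto_diag_of_tendsto_mulVec (hsum : ∑ k, η k = n + 1)
    {A : ℕ → Matrix (Fin (n + 1)) (Fin (n + 1)) ℂ} (hA : ∀ t, A t ∈ Kset n r η)
    {x : ℕ → Fin (n + 1) → ℂ} {x₀ w : Fin (n + 1) → ℂ} (hx : Tendsto x atTop (𝓝 x₀))
    (hx₀ : ∀ (k : Fin r) (s : Fin (n + 1)), (s : ℕ) = blockStart η k → x₀ s ≠ 0)
    (hAx : Tendsto (fun t => A t *ᵥ x t) atTop (𝓝 w)) :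
    ∃ μ, Tendsto (fun t => (A t).diag) atTop (𝓝 μ) := by
  suffices ∀ i, ∃ c, Tendsto (fun t => A t i i) atTop (𝓝 c) by
    choose μ hμ using this
    exact ⟨μ, tendsto_pi_nhds.mpr hμ⟩
  intro i
  obtain ⟨k, hk⟩ := exists_inBlock hsum i
  let s : Fin (n + 1) := ⟨blockStart η k, hk.1.trans_lt i.isLt⟩
  have hs : inBlock η k s := ⟨le_rfl, hk.1.trans_lt hk.2⟩
  have hxs : Tendsto (fun t => x t s) atTop (𝓝 (x₀ s)) := tendsto_pi_nhds.mp hx s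
  refine ⟨w s / x₀ s, ((tendsto_pi_nhds.mp hAx s).div hxs (hx₀ k s rfl)).congr' ?_⟩
  filter_upwards [hxs.eventually_ne (hx₀ k s rfl)] with t ht
  simp only [Pi.div_apply]
  rw [Kset.mulVec_apply_of_eq_blockStart (hA t) rfl, (hA t).2.2 k i s hk hs,
    mul_div_cancel_right₀ _ ht]

end BlockTriangular

lemma mem_map_sup_map₂_of_tendsto_mulVec {n r : ℕ} {η : Fin r → ℕ} (hsum : ∑ k, η k = n + 1)
    {𝒜 : Submodule ℂ (Matrix (Fin (n + 1)) (Fin (n + 1)) ℂ)} (hK : 𝒜 ≤ KsetSubmodule n r η)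
    {A : ℕ → Matrix (Fin (n + 1)) (Fin (n + 1)) ℂ} (hA : ∀ t, A t ∈ 𝒜)
    {x : ℕ → Fin (n + 1) → ℂ} {x₀ w : Fin (n + 1) → ℂ} (hx : Tendsto x atTop (𝓝 x₀))
    (hx₀ : ∀ (k : Fin r) (s : Fin (n + 1)), (s : ℕ) = blockStart η k → x₀ s ≠ 0)
    (hAx : Tendsto (fun t => A t *ᵥ x t) atTop (𝓝 w)) :
    w ∈ 𝒜.map ((mulVecBilin ℂ ℂ).flip x₀) ⊔
      Submodule.map₂ (mulVecBilin ℂ ℂ) (𝒜 ⊓ LinearMap.ker (diagLinearMap _ ℂ ℂ)) ⊤ := by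
  obtain ⟨μ, hμ⟩ := exists_tendsto_diag_of_tendsto_mulVec hsum (fun t => hK (hA t)) hx hx₀ hAx
  obtain ⟨τ, hτ𝒜, hτ⟩ := LinearMap.exists_section_on_map (diagLinearMap _ ℂ ℂ) 𝒜
  have hC : Tendsto (fun t => τ (A t).diag) atTop (𝓝 (τ μ)) :=
    (τ.continuous_of_finiteDimensional.tendsto μ).comp hμ
  have hN : ∀ t, A t - τ (A t).diag ∈ 𝒜 ⊓ LinearMap.ker (diagLinearMap _ ℂ ℂ) := fun t =>
    ⟨sub_mem (hA t) (hτ𝒜 _), LinearMap.mem_ker.mpr <| by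
      rw [map_sub, sub_eq_zero]
      exact (hτ _ ⟨A t, hA t, rfl⟩).symm⟩
  have hNx : Tendsto (fun t => (A t - τ (A t).diag) *ᵥ x t) atTop (𝓝 (w - τ μ *ᵥ x₀)) := by
    simpa only [Matrix.sub_mulVec] using hAx.sub (hC.matrix_mulVec hx)
  have hmem : w - τ μ *ᵥ x₀ ∈ Submodule.map₂ (mulVecBilin ℂ ℂ)
      (𝒜 ⊓ LinearMap.ker (diagLinearMap _ ℂ ℂ)) ⊤ :=
    (Submodule.closed_of_finiteDimensional _).mem_of_tendsto hNx
      (Eventually.of_forall fun t => Submodule.apply_mem_map₂ _ (hN t) trivial)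
  rw [← add_sub_cancel (τ μ *ᵥ x₀) w]
  exact Submodule.add_mem_sup ⟨τ μ, hτ𝒜 μ, by simp⟩ hmem

theorem map_wordSpan_eq_top_of_Jset_eq_univ {n p r : ℕ} {η : Fin r → ℕ} {f : Fin p → AffMap n}
    {v : Fin n → ℂ} (hsum : ∑ k, η k = n + 1) (hB : ∀ i j, Commute (Phi (f i)) (Phi (f j)))
    (hK : wordSpan (fun j => Phi (f j)) ≤ KsetSubmodule n r η) (hv : v ∈ Uprime n r η)
    (hJ : Jset f v = Set.univ) :
    (wordSpan fun j => Phi (f j)).map ((mulVecBilin ℂ ℂ).flip (Fin.cons 1 v)) = ⊤ := by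
  refine eq_top_of_sup_map₂_mulVecBilin_eq_top
    (𝒩 := wordSpan (fun j => Phi (f j)) ⊓ LinearMap.ker (diagLinearMap _ ℂ ℂ))
    (fun N hN i j hij => Kset.apply_eq_zero_of_le (hK hN.1) hN.2 hij) ?_ ?_
  · refine Submodule.map₂_le.mpr ?_
    rintro N hN _ ⟨A, hA, rfl⟩
    exact ⟨N * A, mul_mem_wordSpan hB hN.1 hA, by simp [Matrix.mulVec_mulVec]⟩
  · refine Submodule.eq_top_of_forall_cons_one_mem fun y => ?_
    obtain ⟨xs, k, hxs, -, hy⟩ : y ∈ Jset f v := hJ ▸ trivial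
    refine mem_map_sup_map₂_of_tendsto_mulVec hsum hK (fun t => wordMat_mem_wordSpan (k t))
      (tendsto_cons_one_iff.mpr hxs) hv ?_
    simpa only [wordMat_Phi_mulVec_cons] using tendsto_cons_one_iff.mpr hy

lemma tendsto_mulVec_of_map_eq_top {α ι 𝕜 : Type*} [Fintype ι] [DecidableEq ι]
    [NontriviallyNormedField 𝕜] [CompleteSpace 𝕜] {𝒜 : Submodule 𝕜 (Matrix ι ι 𝕜)} (h1 : 1 ∈ 𝒜)
    {x₀ : ι → 𝕜} (hcyc : 𝒜.map ((mulVecBilin 𝕜 𝕜).flip x₀) = ⊤) {l : Filter α}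
    {B : α → Matrix ι ι 𝕜} (hB : ∀ a, ∀ C ∈ 𝒜, Commute (B a) C) {x : α → ι → 𝕜}
    (hx : Tendsto x l (𝓝 x₀)) {w : ι → 𝕜} (hBx : Tendsto (fun a => B a *ᵥ x a) l (𝓝 w)) :
    Tendsto (fun a => B a *ᵥ x₀) l (𝓝 w) := by
  obtain ⟨τ, hτ𝒜, hτ⟩ := LinearMap.exists_section_on_map ((mulVecBilin 𝕜 𝕜).flip x₀) 𝒜
  let C a := 1 + τ (x a - x₀)
  have hCx : ∀ a, C a *ᵥ x₀ = x a := fun a => by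
    have : τ (x a - x₀) *ᵥ x₀ = x a - x₀ := hτ (x a - x₀) (hcyc ▸ trivial)
    rw [Matrix.add_mulVec, Matrix.one_mulVec, this, add_sub_cancel]
  have hC : Tendsto C l (𝓝 1) := by
    have h0 : Tendsto (fun a => x a - x₀) l (𝓝 0) := by simpa using hx.sub_const x₀
    simpa only [map_zero, add_zero, Function.comp_def, C] using
      (tendsto_const_nhds (x := (1 : Matrix ι ι 𝕜))).add
        ((τ.continuous_of_finiteDimensional.tendsto 0).comp h0)
  refine tendsto_of_tendsto_mulVec_of_tendsto_one hC (hBx.congr fun a => ?_)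
  rw [Matrix.mulVec_mulVec, ← (hB a (C a) (add_mem h1 (hτ𝒜 _))).eq, ← Matrix.mulVec_mulVec, hCx]

theorem dense_orbit_of_Jset_eq_univ_of_mem_Uprime_general
    (n p r : ℕ)
    (η : Fin r → ℕ) (hsum : ∑ k, η k = n + 1)
    (f : Fin p → AffMap n)
    (hcomm : ∀ i j, affComp (f i) (f j) = affComp (f j) (f i))
    (hK : ∀ k : Fin p → ℕ, 1 ≤ ∑ j, k j →
      wordMat (fun j => Phi (f j)) k ∈ Kset n r η)
    (v : Fin n → ℂ) (hv : v ∈ Uprime n r η)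
    (hJ : Jset f v = Set.univ) :
    Dense (affOrbit f v) := by
  have hB : ∀ i j, Commute (Phi (f i)) (Phi (f j)) := fun i j => by
    rw [Commute, SemiconjBy, ← Phi_affComp, ← Phi_affComp, hcomm]
  have hK' : wordSpan (fun j => Phi (f j)) ≤ KsetSubmodule n r η :=
    wordSpan_le _ (one_mem_Kset hsum) hK
  have hcyc := map_wordSpan_eq_top_of_Jset_eq_univ hsum hB hK' hv hJ
  refine dense_iff_closure_eq.mpr (Set.eq_univ_of_forall fun y => ?_)
  obtain ⟨xs, k, hxs, hk, hy⟩ : y ∈ Jset f v := hJ ▸ trivial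
  have hlim : Tendsto (fun t => wordApply f (k t) v) atTop (𝓝 y) := by
    rw [← tendsto_cons_one_iff] at hxs hy ⊢
    simp only [← wordMat_Phi_mulVec_cons] at hy ⊢
    exact tendsto_mulVec_of_map_eq_top one_mem_wordSpan hcyc
      (fun t _ => commute_wordMat_of_mem_wordSpan hB (k t)) hxs hy
  exact mem_closure_of_tendsto hlim ((hk.eventually_ge_atTop 1).mono fun t ht => ⟨k t, ht, rfl⟩)

/-- **(Normal-form case of Theorem 1.1.)** Let `𝒢` be an abelian semigroup of
affine maps of `ℂⁿ` generated by `f₁,…,f_p` (`p ≥ 1`) such that `G = Φ(𝒢)` is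
contained in `K_{η,r}(ℂ)` for some partition `η = (n₁,…,n_r)` of `n+1`. If
`J_𝒢(v) = ℂⁿ` for some `v ∈ U'`, then `𝒢(v)` is dense in `ℂⁿ`. -/
theorem dense_orbit_of_Jset_eq_univ_of_mem_Uprime
    (n p r : ℕ) (hp : 1 ≤ p) (hr : 1 ≤ r)
    (η : Fin r → ℕ) (hη : ∀ k, 1 ≤ η k) (hsum : ∑ k, η k = n + 1)
    (f : Fin p → AffMap n)
    (hcomm : ∀ i j, affComp (f i) (f j) = affComp (f j) (f i))
    (hK : ∀ k : Fin p → ℕ, 1 ≤ ∑ j, k j →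
      wordMat (fun j => Phi (f j)) k ∈ Kset n r η)
    (v : Fin n → ℂ) (hv : v ∈ Uprime n r η)
    (hJ : Jset f v = Set.univ) :
    Dense (affOrbit f v) :=
  dense_orbit_of_Jset_eq_univ_of_mem_Uprime_general n p r η hsum f hcomm hK v hv hJ
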